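/- For all integers n ≥ 2 and k with 1 ≤ k ≤ n − 1, the expected length of the longest k-zigzagging subsequence and the expected length of the longest k-alternating subsequence of a uniformly random permutation of [n] satisfy E[zs_{n,k}] = E[as_{n,k}] + 1/2. -/

import Mathlib

open Filter

namespace PaperKAlt

/-- `i` (a value in `Fin n`, 0-indexed) is a `k`-peak of the permutation `σ`.
The paper's 1-indexed condition `σ(j) ≤ i − k` is rendered as `σ j + k ≤ i`,
which is equivalent for positive integers and invariant under the shift to 0-indexing. -/
def IsKPeak (n k : ℕ) (σ : Equiv.Perm (Fin n)) (i : Fin n) : Prop :=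
  (∀ s : Fin n, σ.symm i < s → i < σ s →
      ∃ j : Fin n, σ.symm i < j ∧ j ≤ s ∧ (σ j : ℕ) + k ≤ (i : ℕ)) ∧
  (∀ s : Fin n, s < σ.symm i → i < σ s →
      ∃ j : Fin n, s ≤ j ∧ j < σ.symm i ∧ (σ j : ℕ) + k ≤ (i : ℕ))

/-- The number of `k`-peaks of `σ`. -/
noncomputable def numKPeaks (n k : ℕ) (σ : Equiv.Perm (Fin n)) : ℕ :=
  Nat.card {i : Fin n // IsKPeak n k σ i}

/-- `i` is a local `k`-peak of `σ` with window `m`. -/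
def IsLocalKPeak (n k m : ℕ) (σ : Equiv.Perm (Fin n)) (i : Fin n) : Prop :=
  ((∃ j : Fin n, σ.symm i < j ∧ (j : ℕ) ≤ (σ.symm i : ℕ) + m ∧ (σ j : ℕ) + k ≤ (i : ℕ) ∧
      ∀ s : Fin n, σ.symm i ≤ s → s ≤ j → σ s ≤ i ∧ σ j ≤ σ s) ∨
    (n ≤ (σ.symm i : ℕ) + m + 1 ∧ ∀ s : Fin n, σ.symm i ≤ s → σ s ≤ i)) ∧
  ((∃ j : Fin n, j < σ.symm i ∧ (σ.symm i : ℕ) ≤ (j : ℕ) + m ∧ (σ j : ℕ) + k ≤ (i : ℕ) ∧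
      ∀ s : Fin n, j ≤ s → s ≤ σ.symm i → σ s ≤ i ∧ σ j ≤ σ s) ∨
    ((σ.symm i : ℕ) ≤ m ∧ ∀ s : Fin n, s ≤ σ.symm i → σ s ≤ i))

/-- The number of local `k`-peaks of `σ` with window `m`. -/
noncomputable def numLocalKPeaks (n k m : ℕ) (σ : Equiv.Perm (Fin n)) : ℕ :=
  Nat.card {i : Fin n // IsLocalKPeak n k m σ i}

/-- `AltChain n k σ b l` : the list of positions `l` is strictly increasing and the
values of `σ` along it alternate, with a descent of size at least `k` first when
`b = true` (an ascent first when `b = false`). -/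
def AltChain (n k : ℕ) (σ : Equiv.Perm (Fin n)) : Bool → List (Fin n) → Prop
  | _, [] => True
  | _, [_] => True
  | b, x :: y :: l =>
      x < y ∧
        (if b then (σ y : ℕ) + k ≤ (σ x : ℕ) else (σ x : ℕ) + k ≤ (σ y : ℕ)) ∧
        AltChain n k σ (!b) (y :: l)

/-- The length of the longest `k`-alternating subsequence of `σ`. -/
noncomputable def asLen (n k : ℕ) (σ : Equiv.Perm (Fin n)) : ℕ :=
  sSup {t : ℕ | ∃ l : List (Fin n), AltChain n k σ true l ∧ l.length = t}

/-- The length of the longest `k`-zigzagging subsequence of `σ` : the max of the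
longest `k`-alternating subsequence of `σ` and of its vertical flip. -/
noncomputable def zsLen (n k : ℕ) (σ : Equiv.Perm (Fin n)) : ℕ :=
  max (asLen n k σ) (asLen n k (σ.trans Fin.revPerm))

/-- Expectation of `f` under the uniform measure on permutations of `Fin n`. -/
noncomputable def pexp (n : ℕ) (f : Equiv.Perm (Fin n) → ℝ) : ℝ :=
  (∑ σ : Equiv.Perm (Fin n), f σ) / (Fintype.card (Equiv.Perm (Fin n)))

/-- Variance of `f` under the uniform measure on permutations of `Fin n`. -/
noncomputable def pvar (n : ℕ) (f : Equiv.Perm (Fin n) → ℝ) : ℝ :=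
  pexp n (fun σ => (f σ - pexp n f) ^ 2)

/-- Probability of the event `A` under the uniform measure on permutations of `Fin n`. -/
noncomputable def pprob (n : ℕ) (A : Equiv.Perm (Fin n) → Prop) : ℝ :=
  (Nat.card {σ : Equiv.Perm (Fin n) // A σ} : ℝ) / (Fintype.card (Equiv.Perm (Fin n)))

/-- The cumulative distribution function of the standard normal distribution. -/
noncomputable def stdGaussCDF (t : ℝ) : ℝ :=
  ∫ x in Set.Iic t, Real.exp (-(x ^ 2) / 2) / Real.sqrt (2 * Real.pi)

/-- The (contiguous) section of `σ` from position `a` to position `b` is `k`-ascending. -/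
def IsKAscSection (n k : ℕ) (σ : Equiv.Perm (Fin n)) (a b : Fin n) : Prop :=
  a < b ∧
  (∀ s : Fin n, a ≤ s → s ≤ b → σ a ≤ σ s ∧ σ s ≤ σ b) ∧
  (σ a : ℕ) + k ≤ (σ b : ℕ) ∧
  (∀ s t : Fin n, a ≤ s → s < t → t ≤ b → (σ s : ℕ) < (σ t : ℕ) + k)

/-- The section from `a` to `b` is a maximal `k`-ascending section. -/
def IsMaxKAscSection (n k : ℕ) (σ : Equiv.Perm (Fin n)) (a b : Fin n) : Prop :=
  IsKAscSection n k σ a b ∧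
  ∀ a' b' : Fin n, IsKAscSection n k σ a' b' → a' ≤ a → b ≤ b' → a' = a ∧ b' = b

/-- The (contiguous) section of `σ` from position `a` to position `b` is `k`-descending. -/
def IsKDescSection (n k : ℕ) (σ : Equiv.Perm (Fin n)) (a b : Fin n) : Prop :=
  a < b ∧
  (∀ s : Fin n, a ≤ s → s ≤ b → σ b ≤ σ s ∧ σ s ≤ σ a) ∧
  (σ b : ℕ) + k ≤ (σ a : ℕ) ∧
  (∀ s t : Fin n, a ≤ s → s < t → t ≤ b → (σ t : ℕ) < (σ s : ℕ) + k)

/-- The section from `a` to `b` is a maximal `k`-descending section. -/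
def IsMaxKDescSection (n k : ℕ) (σ : Equiv.Perm (Fin n)) (a b : Fin n) : Prop :=
  IsKDescSection n k σ a b ∧
  ∀ a' b' : Fin n, IsKDescSection n k σ a' b' → a' ≤ a → b ≤ b' → a' = a ∧ b' = b

/-- The value `σ i` (at position `i`) is a `k`-peak in the sense of maximal
`k`-ascending/`k`-descending sections. -/
def IsKPeakAtPos (n k : ℕ) (σ : Equiv.Perm (Fin n)) (i : Fin n) : Prop :=
  (∃ a : Fin n, IsMaxKAscSection n k σ a i) ∨ (∃ b : Fin n, IsMaxKDescSection n k σ i b)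

/-! The longest `k`-alternating subsequence of the flip of `σ` is the longest alternating
subsequence of `σ` that starts with an ascent. For `1 ≤ k ≤ n - 1` the longest alternating
subsequences starting with a descent and with an ascent have lengths differing by exactly one:
dropping the first term bounds each by the other plus one, and if both had the same length `L`,
moving their first terms to the largest (resp. smallest) value available before their second
terms lets one of them be prefixed by the other's first term, giving length `L + 1`.
Hence `zs = (as σ + as σ̃ + 1) / 2`, and `σ ↦ σ̃` preserves the uniform measure. -/

theorem exists_max_image_Iio {α β : Type*} [Preorder α] [LocallyFiniteOrderBot α]
    [LinearOrder β] (f : α → β) {x d : α} (hxd : x < d) : ∃ e < d, ∀ p < d, f p ≤ f e := by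
  obtain ⟨e, he, hmax⟩ := Finset.exists_max_image (Finset.Iio d) f ⟨x, Finset.mem_Iio.mpr hxd⟩
  exact ⟨e, Finset.mem_Iio.mp he, fun p hp => hmax p (Finset.mem_Iio.mpr hp)⟩

theorem exists_min_image_Iio {α β : Type*} [Preorder α] [LocallyFiniteOrderBot α]
    [LinearOrder β] (f : α → β) {x d : α} (hxd : x < d) : ∃ m < d, ∀ p < d, f m ≤ f p := by
  obtain ⟨m, hm, hmin⟩ := Finset.exists_min_image (Finset.Iio d) f ⟨x, Finset.mem_Iio.mpr hxd⟩
  exact ⟨m, Finset.mem_Iio.mp hm, fun p hp => hmin p (Finset.mem_Iio.mpr hp)⟩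

theorem sum_comp_trans {α M : Type*} [Fintype α] [DecidableEq α] [AddCommMonoid M]
    (f : Equiv.Perm α → M) (τ : Equiv.Perm α) :
    ∑ σ : Equiv.Perm α, f (σ.trans τ) = ∑ σ, f σ :=
  Equiv.sum_comp (Equiv.mulLeft τ) f

section AltChain

variable {n k : ℕ} {σ : Equiv.Perm (Fin n)}

theorem AltChain.tail {b : Bool} {x : Fin n} {l : List (Fin n)}
    (h : AltChain n k σ b (x :: l)) : AltChain n k σ (!b) l := by
  match l, h with
  | [], _ => trivial
  | [_], _ => trivial
  | _ :: _ :: _, h => exact h.2.2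

theorem AltChain.isChain {b : Bool} {l : List (Fin n)} (h : AltChain n k σ b l) :
    l.IsChain (· < ·) := by
  induction l generalizing b with
  | nil => exact List.isChain_nil
  | cons x l ih =>
    match l, h with
    | [], _ => exact List.isChain_singleton _
    | _ :: _, h => exact List.isChain_cons_cons.mpr ⟨h.1, ih h.2.2⟩

theorem AltChain.length_le {b : Bool} {l : List (Fin n)} (h : AltChain n k σ b l) :
    l.length ≤ n := by
  have hnd : l.Nodup := (List.isChain_iff_pairwise.mp h.isChain).imp ne_of_lt
  simpa using hnd.length_le_card

theorem altChain_flip_iff {b : Bool} {l : List (Fin n)} :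
    AltChain n k (σ.trans Fin.revPerm) b l ↔ AltChain n k σ (!b) l := by
  have rev_le_rev (u v : Fin n) :
      ((σ.trans Fin.revPerm u : Fin n) : ℕ) + k ≤ (σ.trans Fin.revPerm v : Fin n) ↔
        (σ v : ℕ) + k ≤ σ u := by
    have := (σ u).isLt
    have := (σ v).isLt
    simp only [Equiv.trans_apply, Fin.revPerm_apply, Fin.val_rev]
    omega
  induction l generalizing b with
  | nil => exact Iff.rfl
  | cons x l ih =>
    match l with
    | [] => exact Iff.rfl
    | y :: t =>
      cases b <;> simp only [AltChain, rev_le_rev, ih, Bool.not_false, Bool.not_true,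
        if_true, if_false, Bool.false_eq_true]

end AltChain

noncomputable def altLen (n k : ℕ) (σ : Equiv.Perm (Fin n)) (b : Bool) : ℕ :=
  sSup {t : ℕ | ∃ l : List (Fin n), AltChain n k σ b l ∧ l.length = t}

section altLen

variable {n k : ℕ} {σ : Equiv.Perm (Fin n)}

theorem asLen_eq_altLen : asLen n k σ = altLen n k σ true := rfl

theorem asLen_flip_eq_altLen : asLen n k (σ.trans Fin.revPerm) = altLen n k σ false := by
  simp only [asLen, altLen, altChain_flip_iff, Bool.not_true]

theorem bddAbove_altChain_lengths (b : Bool) :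
    BddAbove {t : ℕ | ∃ l : List (Fin n), AltChain n k σ b l ∧ l.length = t} :=
  ⟨n, fun _ ⟨_, hl, ht⟩ => ht ▸ hl.length_le⟩

theorem length_le_altLen {b : Bool} {l : List (Fin n)} (h : AltChain n k σ b l) :
    l.length ≤ altLen n k σ b :=
  le_csSup (bddAbove_altChain_lengths b) ⟨l, h, rfl⟩

theorem exists_altChain_length_eq_altLen (b : Bool) :
    ∃ l : List (Fin n), AltChain n k σ b l ∧ l.length = altLen n k σ b :=
  Nat.sSup_mem (s := {t | ∃ l : List (Fin n), AltChain n k σ b l ∧ l.length = t})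
    ⟨0, [], trivial, rfl⟩ (bddAbove_altChain_lengths b)

theorem altLen_le_altLen_not_add_one (b : Bool) : altLen n k σ b ≤ altLen n k σ (!b) + 1 := by
  obtain ⟨l, hl, hlen⟩ := exists_altChain_length_eq_altLen (σ := σ) (k := k) b
  match l, hl with
  | [], _ => simp only [List.length_nil] at hlen; omega
  | _ :: t, hl =>
    have := length_le_altLen hl.tail
    simp only [List.length_cons] at hlen
    omega

theorem two_le_altLen_or (hk : 1 ≤ k) (hkn : k ≤ n - 1) :
    2 ≤ altLen n k σ true ∨ 2 ≤ altLen n k σ false := by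
  have hn : 0 < n := by omega
  obtain ⟨lo, hlo⟩ : ∃ lo, σ lo = ⟨0, hn⟩ := σ.surjective _
  obtain ⟨hi, hhi⟩ : ∃ hi, σ hi = ⟨n - 1, by omega⟩ := σ.surjective _
  have hgap : (σ lo : ℕ) + k ≤ σ hi := by rw [hlo, hhi]; show 0 + k ≤ n - 1; omega
  rcases lt_or_gt_of_ne (show lo ≠ hi by rintro rfl; omega) with h | h
  · exact .inr (length_le_altLen (b := false) (l := [lo, hi]) ⟨h, by simpa using hgap, trivial⟩)
  · exact .inl (length_le_altLen (b := true) (l := [hi, lo]) ⟨h, by simpa using hgap, trivial⟩)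

theorem exists_altChain_prepend_of_true_of_false (hk : 1 ≤ k) {d₁ d₂ a₁ a₂ : Fin n}
    {lD lA : List (Fin n)} (hD : AltChain n k σ true (d₁ :: d₂ :: lD))
    (hA : AltChain n k σ false (a₁ :: a₂ :: lA)) :
    ∃ e m, AltChain n k σ false (m :: e :: d₂ :: lD) ∨
      AltChain n k σ true (e :: m :: a₂ :: lA) := by
  obtain ⟨hd, hdgap, hDtail⟩ := hD
  obtain ⟨ha, hagap, hAtail⟩ := hA
  simp only [if_true, Bool.false_eq_true, if_false] at hdgap hagap
  obtain ⟨e, he, hemax⟩ := exists_max_image_Iio (fun p => (σ p : ℕ)) hd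
  obtain ⟨m, hm, hmmin⟩ := exists_min_image_Iio (fun p => (σ p : ℕ)) ha
  have hd₁ := hemax d₁ hd
  have ha₁ := hmmin a₁ ha
  have hme : (σ m : ℕ) + k ≤ σ e := by
    rcases lt_trichotomy a₂ d₂ with h | rfl | h
    · have := hemax a₂ h; omega
    · omega
    · have := hmmin d₂ h; omega
  refine ⟨e, m, ?_⟩
  rcases lt_or_gt_of_ne (show m ≠ e from fun h => by rw [h] at hme; omega) with h | h
  · exact .inl ⟨h, by simpa using hme, he, by simpa using (by omega : (σ d₂ : ℕ) + k ≤ σ e),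
      hDtail⟩
  · exact .inr ⟨h, by simpa using hme, hm, by simpa using (by omega : (σ m : ℕ) + k ≤ σ a₂),
      hAtail⟩

theorem altLen_true_ne_altLen_false (hk : 1 ≤ k) (hkn : k ≤ n - 1) :
    altLen n k σ true ≠ altLen n k σ false := by
  intro heq
  obtain ⟨lD, hD, hDlen⟩ := exists_altChain_length_eq_altLen (σ := σ) (k := k) true
  obtain ⟨lA, hA, hAlen⟩ := exists_altChain_length_eq_altLen (σ := σ) (k := k) false
  have h2 := two_le_altLen_or (σ := σ) hk hkn
  match lD, lA, hD, hA with
  | d₁ :: d₂ :: lD, a₁ :: a₂ :: lA, hD, hA =>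
    simp only [List.length_cons] at hDlen hAlen
    obtain ⟨e, m, hlong | hlong⟩ := exists_altChain_prepend_of_true_of_false hk hD hA
    · have := length_le_altLen hlong; simp only [List.length_cons] at this; omega
    · have := length_le_altLen hlong; simp only [List.length_cons] at this; omega
  | [], _, _, _ | [_], _, _, _ | _, [], _, _ | _, [_], _, _ =>
    simp only [List.length_cons, List.length_nil] at hDlen hAlen; omega

theorem zsLen_eq (hk : 1 ≤ k) (hkn : k ≤ n - 1) :
    (zsLen n k σ : ℝ) = (asLen n k σ + asLen n k (σ.trans Fin.revPerm) + 1) / 2 := by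
  have h₁ := altLen_le_altLen_not_add_one (k := k) (σ := σ) true
  have h₂ := altLen_le_altLen_not_add_one (k := k) (σ := σ) false
  have hne := altLen_true_ne_altLen_false (σ := σ) hk hkn
  simp only [Bool.not_true, Bool.not_false] at h₁ h₂
  rw [zsLen, asLen_eq_altLen, asLen_flip_eq_altLen]
  rcases Nat.lt_or_gt_of_ne hne with h | h
  · rw [max_eq_right h.le, (by omega : altLen n k σ false = altLen n k σ true + 1)]
    push_cast; ring
  · rw [max_eq_left h.le, (by omega : altLen n k σ true = altLen n k σ false + 1)]
    push_cast; ring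

end altLen

theorem expectation_zsLen_general (n k : ℕ) (hk : 1 ≤ k) (hkn : k ≤ n - 1) :
    pexp n (fun σ => (zsLen n k σ : ℝ)) =
      pexp n (fun σ => (asLen n k σ : ℝ)) + 1 / 2 := by
  have hcard : (Fintype.card (Equiv.Perm (Fin n)) : ℝ) ≠ 0 := by positivity
  simp only [pexp, zsLen_eq hk hkn, ← Finset.sum_div, Finset.sum_add_distrib,
    sum_comp_trans (fun σ => (asLen n k σ : ℝ)), Finset.sum_const, Finset.card_univ,
    nsmul_eq_mul, mul_one]
  field_simp
  ring

/-- the expected length of the longest `k`-zigzagging subsequence equals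
the expected length of the longest `k`-alternating subsequence plus `1/2`. -/
theorem expectation_zsLen (n k : ℕ) (hn : 2 ≤ n) (hk : 1 ≤ k) (hkn : k ≤ n - 1) :
    pexp n (fun σ => (zsLen n k σ : ℝ)) =
      pexp n (fun σ => (asLen n k σ : ℝ)) + 1 / 2 :=
  expectation_zsLen_general n k hk hkn

end PaperKAlt
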